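/- arXiv:2209.00217 — 7 statements merged into one kernel-verified Lean document; each statement's English description precedes it below -/
import Mathlib

section
/- Let M be a positive integer, h > 0, L := M·h, and let v be a grid function on {0,…,M} with v₀ = v_M = 0. Then the discrete maximum norm satisfies ‖v‖_∞ ≤ (√L/2)·|v|₁. -/
/-!
Telescoping from either endpoint, the triangle inequality gives `2 |vᵢ| ≤ ∑ⱼ |v_{j+1} - v_j|`,
and Cauchy–Schwarz bounds this sum by `√M · (∑ⱼ (v_{j+1} - v_j)²)^{1/2} = √L · |v|₁`.
-/

open Finset

theorem abs_sub_add_abs_sub_le_sum_abs_sub (v : ℕ → ℝ) {m i n : ℕ} (hmi : m ≤ i) (hin : i ≤ n) :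
    |v i - v m| + |v n - v i| ≤ ∑ j ∈ Ico m n, |v (j + 1) - v j| := by
  rw [← sum_Ico_consecutive _ hmi hin, ← sum_Ico_sub v hmi, ← sum_Ico_sub v hin]
  exact add_le_add (abs_sum_le_sum_abs _ _) (abs_sum_le_sum_abs _ _)

theorem sum_abs_le_sqrt_card_mul_sum_sq {ι : Type*} (s : Finset ι) (f : ι → ℝ) :
    ∑ i ∈ s, |f i| ≤ √(#s * ∑ i ∈ s, f i ^ 2) := by
  apply Real.le_sqrt_of_sq_le
  simpa only [sq_abs] using sq_sum_le_card_mul_sum_sq (s := s) (f := fun i => |f i|)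

theorem abs_le_sqrt_mul_sum_sq_sub_div_two (v : ℕ → ℝ) {M i : ℕ} (hv0 : v 0 = 0)
    (hvM : v M = 0) (hi : i ≤ M) :
    |v i| ≤ √(M * ∑ j ∈ range M, (v (j + 1) - v j) ^ 2) / 2 := by
  have h := abs_sub_add_abs_sub_le_sum_abs_sub v (Nat.zero_le i) hi
  rw [hv0, hvM, ← range_eq_Ico, sub_zero, zero_sub, abs_neg] at h
  have hcs := sum_abs_le_sqrt_card_mul_sum_sq (range M) (fun j => v (j + 1) - v j)
  rw [card_range] at hcs
  linarith

theorem sum_Icc_one_eq_sum_range {β : Type*} [AddCommMonoid β] (f : ℕ → β) (n : ℕ) :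
    ∑ i ∈ Icc 1 n, f i = ∑ i ∈ range n, f (i + 1) := by
  rw [range_eq_Ico, sum_Ico_add', zero_add, Ico_add_one_right_eq_Icc]

theorem sqrt_mul_sqrt_mul_sum_div_sq {h : ℝ} (hh : 0 < h) (M : ℕ) (d : ℕ → ℝ) :
    √(M * h) * √(h * ∑ j ∈ range M, (d j / h) ^ 2) = √(M * ∑ j ∈ range M, d j ^ 2) := by
  rw [← Real.sqrt_mul (by positivity)]
  congr 1
  simp only [div_pow, ← sum_div]
  field_simp

theorem stmt_0_general (M : ℕ) (h L : ℝ) (hh : 0 < h) (hL : L = M * h)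
    (v : ℕ → ℝ) (hv0 : v 0 = 0) (hvM : v M = 0) :
    (Finset.range (M + 1)).sup' (Finset.nonempty_range_iff.mpr (Nat.succ_ne_zero M))
        (fun i => |v i|) ≤
      Real.sqrt L / 2 *
        Real.sqrt (h * ∑ i ∈ Finset.Icc 1 M, ((v i - v (i - 1)) / h) ^ 2) := by
  rw [sum_Icc_one_eq_sum_range, div_mul_eq_mul_div, hL]
  simp only [Nat.add_sub_cancel]
  rw [sqrt_mul_sqrt_mul_sum_div_sq hh]
  refine sup'_le _ _ fun i hi => ?_
  exact abs_le_sqrt_mul_sum_sq_sub_div_two v hv0 hvM (Nat.lt_succ_iff.mp (mem_range.mp hi))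

/-- Discrete Sobolev embedding: for a grid function `v` on `{0,…,M}` vanishing at the
endpoints, the discrete maximum norm is bounded by `(√L / 2)` times the discrete
`H¹`-seminorm `|v|₁ = (h ∑_{i=1}^{M} ((vᵢ - v_{i-1})/h)²)^{1/2}`, where `L = M·h`. -/
theorem stmt_0 (M : ℕ) (hM : 0 < M) (h L : ℝ) (hh : 0 < h) (hL : L = M * h)
    (v : ℕ → ℝ) (hv0 : v 0 = 0) (hvM : v M = 0) :
    (Finset.range (M + 1)).sup' (Finset.nonempty_range_iff.mpr (Nat.succ_ne_zero M))
        (fun i => |v i|) ≤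
      Real.sqrt L / 2 *
        Real.sqrt (h * ∑ i ∈ Finset.Icc 1 M, ((v i - v (i - 1)) / h) ^ 2) :=
  stmt_0_general M h L hh hL v hv0 hvM
end

section
/- Let M be a positive integer, h > 0, and let v be a grid function on {0,…,M} with v₀ = v_M = 0. Then the inverse estimate |v|₁ ≤ (2/h)·‖v‖ holds. -/
theorem aux_key (k : ℕ) (v : ℕ → ℝ) (hv0 : v 0 = 0) (hvM : v (k + 1) = 0) :
    ∑ i ∈ Finset.range (k + 1), (v (i + 1) - v i) ^ 2 ≤
      4 * ∑ i ∈ Finset.range k, v (i + 1) ^ 2 := by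
  have h1 : ∑ i ∈ Finset.range (k + 1), (v (i + 1) - v i) ^ 2 ≤
      ∑ i ∈ Finset.range (k + 1), (2 * v (i + 1) ^ 2 + 2 * v i ^ 2) := by
    apply Finset.sum_le_sum
    intro i _
    nlinarith [sq_nonneg (v (i + 1) + v i)]
  have h2 : ∑ i ∈ Finset.range (k + 1), (2 * v (i + 1) ^ 2 + 2 * v i ^ 2) =
      2 * (∑ i ∈ Finset.range (k + 1), v (i + 1) ^ 2)
        + 2 * (∑ i ∈ Finset.range (k + 1), v i ^ 2) := by
    rw [Finset.sum_add_distrib, Finset.mul_sum, Finset.mul_sum]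
  have h3 : ∑ i ∈ Finset.range (k + 1), v (i + 1) ^ 2 =
      (∑ i ∈ Finset.range k, v (i + 1) ^ 2) + v (k + 1) ^ 2 :=
    Finset.sum_range_succ _ _
  have h4 : ∑ i ∈ Finset.range (k + 1), v i ^ 2 =
      (∑ i ∈ Finset.range k, v (i + 1) ^ 2) + v 0 ^ 2 :=
    Finset.sum_range_succ' _ _
  rw [h2, h3, h4, hv0, hvM] at h1
  linarith

/-- Inverse estimate: for a grid function `v` on `{0,…,M}` vanishing at the endpoints,
`|v|₁ ≤ (2/h)·‖v‖`. -/
theorem stmt_3 (M : ℕ) (hM : 0 < M) (h : ℝ) (hh : 0 < h)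
    (v : ℕ → ℝ) (hv0 : v 0 = 0) (hvM : v M = 0) :
    Real.sqrt (h * ∑ i ∈ Finset.Icc 1 M, ((v i - v (i - 1)) / h) ^ 2) ≤
      2 / h * Real.sqrt (h * ∑ i ∈ Finset.Icc 1 (M - 1), (v i) ^ 2) := by
  obtain ⟨k, rfl⟩ : ∃ k, M = k + 1 := ⟨M - 1, (Nat.succ_pred_eq_of_pos hM).symm⟩
  have hL : ∑ i ∈ Finset.Icc 1 (k + 1), ((v i - v (i - 1)) / h) ^ 2 =
      ∑ i ∈ Finset.range (k + 1), ((v (i + 1) - v i) / h) ^ 2 := by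
    rw [← Finset.Ico_add_one_right_eq_Icc, Finset.sum_Ico_eq_sum_range]
    simp [add_comm]
  have hR : ∑ i ∈ Finset.Icc 1 (k + 1 - 1), (v i) ^ 2 =
      ∑ i ∈ Finset.range k, v (i + 1) ^ 2 := by
    rw [← Finset.Ico_add_one_right_eq_Icc, Finset.sum_Ico_eq_sum_range]
    simp [add_comm]
  rw [hL, hR]
  have key := aux_key k v hv0 hvM
  have h2h : (0:ℝ) ≤ 2 / h := by positivity
  rw [show (2 / h : ℝ) * Real.sqrt (h * ∑ i ∈ Finset.range k, v (i + 1) ^ 2) =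
      Real.sqrt ((2 / h) ^ 2 * (h * ∑ i ∈ Finset.range k, v (i + 1) ^ 2)) by
    rw [Real.sqrt_mul (sq_nonneg (2/h)), Real.sqrt_sq h2h]]
  apply Real.sqrt_le_sqrt
  have hsum : ∑ i ∈ Finset.range (k + 1), ((v (i + 1) - v i) / h) ^ 2 =
      (1 / h ^ 2) * ∑ i ∈ Finset.range (k + 1), (v (i + 1) - v i) ^ 2 := by
    rw [Finset.mul_sum]; congr 1; ext i; field_simp
  rw [hsum]
  have hh2 : (0:ℝ) < h ^ 2 := by positivity
  calc h * ((1 / h ^ 2) * ∑ i ∈ Finset.range (k + 1), (v (i + 1) - v i) ^ 2)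
      ≤ h * ((1 / h ^ 2) * (4 * ∑ i ∈ Finset.range k, v (i + 1) ^ 2)) := by
        apply mul_le_mul_of_nonneg_left _ hh.le
        exact mul_le_mul_of_nonneg_left key (by positivity)
    _ = (2 / h) ^ 2 * (h * ∑ i ∈ Finset.range k, v (i + 1) ^ 2) := by field_simp; ring
end

section
/- Let M be a positive integer and h > 0. For any grid function u on {0,…,M} and any grid function v on {0,…,M} with v₀ = v_M = 0, the nonlinear discrete convection operator ψ satisfies the orthogonality identity ⟨ψ(u,v), v⟩ = 0, i.e. h·Σ_{i=1}^{M−1} ψ(u,v)ᵢ·vᵢ = 0. -/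
/-- The centered difference quotient `Δₓvᵢ = (v_{i+1} - v_{i-1})/(2h)`. -/
noncomputable def Dx (h : ℝ) (v : ℕ → ℝ) (i : ℕ) : ℝ := (v (i + 1) - v (i - 1)) / (2 * h)

/-- The nonlinear compact convection operator `ψ(u,v)ᵢ = (1/3)[uᵢ·Δₓvᵢ + Δₓ(u·v)ᵢ]`. -/
noncomputable def psi (h : ℝ) (u v : ℕ → ℝ) (i : ℕ) : ℝ :=
  (1 / 3) * (u i * Dx h v i + Dx h (fun j => u j * v j) i)

/-- Orthogonality of the discrete convection operator: for any grid function `u` and any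
grid function `v` vanishing at the endpoints, `⟨ψ(u,v), v⟩ = 0`. -/
theorem stmt_5 (M : ℕ) (hM : 0 < M) (h : ℝ) (hh : 0 < h)
    (u v : ℕ → ℝ) (hv0 : v 0 = 0) (hvM : v M = 0) :
    h * ∑ i ∈ Finset.Icc 1 (M - 1), psi h u v i * v i = 0 := by
  set F : ℕ → ℝ := fun i => (u i + u (i + 1)) * (v i * v (i + 1)) with hF
  have key : ∀ i ∈ Finset.Icc 1 (M - 1),
      psi h u v i * v i = (1 / (6 * h)) * (F (i - 1 + 1) - F (i - 1)) := by
    intro i hi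
    obtain ⟨j, rfl⟩ : ∃ j, i = j + 1 := by
      rcases Nat.exists_eq_add_of_le (Finset.mem_Icc.mp hi).1 with ⟨j, hj⟩
      exact ⟨j, by omega⟩
    simp only [hF, psi, Dx, Nat.add_sub_cancel]
    field_simp
    ring
  rw [Finset.sum_congr rfl key, ← Finset.mul_sum]
  have : ∑ i ∈ Finset.Icc 1 (M - 1), (F (i - 1 + 1) - F (i - 1))
      = ∑ i ∈ Finset.range (M - 1), (F (i + 1) - F i) := by
    have : Finset.Icc 1 (M - 1) = Finset.Ico 1 M := by
      rw [← Finset.Ico_add_one_right_eq_Icc]; congr 1; omega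
    rw [this, Finset.sum_Ico_eq_sum_range]
    apply Finset.sum_congr (by congr 1)
    intro i _
    congr 2 <;> omega
  rw [this, Finset.sum_range_sub]
  have hM1 : M - 1 + 1 = M := by omega
  simp [hF, hv0, hM1, hvM]
end

section
/- Let M be a positive integer, h > 0 and τ > 0. Let a be any grid function on {0,…,M}, and let v, v′ be grid functions on {0,…,M} with v₀ = v_M = v′₀ = v′_M = 0. Then ⟨ψ(a, (v+v′)/2), (v−v′)/τ⟩ = ⟨ψ(a, v′), (v−v′)/τ⟩. -/
lemma psi_key (M : ℕ) (hM : 0 < M) (h : ℝ) (hh : h ≠ 0) (a w : ℕ → ℝ)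
    (hw0 : w 0 = 0) (hwM : w M = 0) :
    ∑ i ∈ Finset.Icc 1 (M - 1), psi h a w i * w i = 0 := by
  have hcong : ∀ i ∈ Finset.Icc 1 (M - 1), psi h a w i * w i =
      (1 / (6 * h)) * (((a (i+1) + a i) * w (i+1) * w i)
        - ((a i + a (i-1)) * w i * w (i-1))) := by
    intro i hi
    obtain ⟨h1, h2⟩ := Finset.mem_Icc.mp hi
    obtain ⟨k, rfl⟩ := Nat.exists_eq_add_of_le h1
    have hk : 1 + k - 1 = k := by omega
    simp only [psi, Dx, hk]
    field_simp
    ring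
  rw [Finset.sum_congr rfl hcong, ← Finset.mul_sum]
  have hIcc : Finset.Icc 1 (M - 1) = Finset.Ico 1 M := by
    rw [← Finset.Ico_add_one_right_eq_Icc]
    congr 1
    omega
  rw [hIcc, Finset.sum_Ico_eq_sum_range]
  have hsum : ∀ i ∈ Finset.range (M - 1),
      ((a (1+i+1) + a (1+i)) * w (1+i+1) * w (1+i)
        - (a (1+i) + a (1+i-1)) * w (1+i) * w (1+i-1))
      = (fun j => (a (j+1) + a j) * w (j+1) * w j) (i+1)
        - (fun j => (a (j+1) + a j) * w (j+1) * w j) i := by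
    intro i _
    have h1 : 1 + i - 1 = i := by omega
    have h2 : 1 + i + 1 = i + 1 + 1 := by omega
    have h3 : 1 + i = i + 1 := by omega
    rw [h1, h2, h3]
  rw [Finset.sum_congr rfl hsum, Finset.sum_range_sub
    (f := fun j => (a (j+1) + a j) * w (j+1) * w j)]
  rw [show M - 1 + 1 = M by omega, hw0, hwM]
  ring

/-- `⟨ψ(a, (v+v')/2), (v-v')/τ⟩ = ⟨ψ(a, v'), (v-v')/τ⟩` for grid functions `v, v'`
vanishing at the endpoints. -/
theorem stmt_6 (M : ℕ) (hM : 0 < M) (h τ : ℝ) (hh : 0 < h) (hτ : 0 < τ)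
    (a v v' : ℕ → ℝ) (hv0 : v 0 = 0) (hvM : v M = 0) (hv'0 : v' 0 = 0) (hv'M : v' M = 0) :
    h * ∑ i ∈ Finset.Icc 1 (M - 1),
        psi h a (fun j => (v j + v' j) / 2) i * ((v i - v' i) / τ)
      = h * ∑ i ∈ Finset.Icc 1 (M - 1), psi h a v' i * ((v i - v' i) / τ) := by
  have key := psi_key M hM h hh.ne' a (fun j => v j - v' j)
    (by simp [hv0, hv'0]) (by simp [hvM, hv'M])
  congr 1
  rw [← sub_eq_zero, ← Finset.sum_sub_distrib]
  have : ∀ i ∈ Finset.Icc 1 (M - 1),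
      psi h a (fun j => (v j + v' j) / 2) i * ((v i - v' i) / τ)
        - psi h a v' i * ((v i - v' i) / τ)
      = (1 / (2 * τ)) * (psi h a (fun j => v j - v' j) i * (v i - v' i)) := by
    intro i _
    simp only [psi, Dx]
    field_simp
    ring
  rw [Finset.sum_congr rfl this, ← Finset.mul_sum, key, mul_zero]
end

section
/- Let 0 < α < 1, τ > 0, N a positive integer and T := N·τ. Define b_i := ∫_{iτ}^{(i+1)τ} s^{−α} ds = (τ^{1−α}/(1−α))·[(i+1)^{1−α} − i^{1−α}] for i ≥ 0. Then for every real sequence g₁, g₂, …, g_N and every real number q̂, one has Σ_{n=1}^{N} [b₀·g_n − Σ_{i=1}^{n−1}(b_{n−i−1} − b_{n−i})·g_i − b_{n−1}·q̂]·g_n ≥ (T^{−α}/2)·τ·Σ_{n=1}^{N} g_n² − (T^{1−α}/(2(1−α)))·q̂². -/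
/-!
Since `b` is nonnegative and nonincreasing, every cross term `gᵢ gₙ` and `q̂ gₙ` carries a
nonnegative weight, so `xy ≤ (x² + y²)/2` turns the form into a diagonal one. Exchanging the
order of the double sum and telescoping shows that `gₙ²` then keeps the coefficient `b_{N-n}/2`,
and `q̂²` the coefficient `-(b₀ + ⋯ + b_{N-1})/2 = -T^{1-α}/(2(1-α))`. Finally
`b_{N-n} ≥ b_{N-1} ≥ τ T^{-α}` by concavity of `s ↦ s^{1-α}`.
-/

open Finset Real

theorem sum_Icc_sub_reflect {R : Type*} [AddCommGroup R] (b : ℕ → R) (n : ℕ) :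
    ∑ i ∈ Icc 1 (n - 1), (b (n - i - 1) - b (n - i)) = b 0 - b (n - 1) := by
  have hIcc : Icc 1 (n - 1) = Ico 1 n := by ext; simp; omega
  rw [hIcc, sum_Ico_eq_sum_range, ← sum_range_sub' b (n - 1),
    ← sum_range_reflect (fun j => b j - b (j + 1))]
  refine sum_congr rfl fun k hk => ?_
  have := mem_range.1 hk
  congr 2 <;> omega

theorem sum_Icc_sum_Icc_sub_mul {R : Type*} [CommRing R] (b x : ℕ → R) (N : ℕ) :
    ∑ n ∈ Icc 1 N, ∑ i ∈ Icc 1 (n - 1), (b (n - i - 1) - b (n - i)) * x i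
      = ∑ i ∈ Icc 1 N, (b 0 - b (N - i)) * x i := by
  induction N with
  | zero => simp
  | succ N ih =>
    rw [sum_Icc_succ_top (by omega), ih, sum_Icc_succ_top (by omega), Nat.add_sub_cancel,
      Nat.sub_self, sub_self, zero_mul, add_zero, ← sum_add_distrib]
    refine sum_congr rfl fun i hi => ?_
    rw [Nat.sub_right_comm, Nat.add_sub_cancel, Nat.sub_add_comm (mem_Icc.1 hi).2]
    ring

section L1Form

variable {b : ℕ → ℝ} (g : ℕ → ℝ) (q : ℝ)

theorem l1_term_lower_bound (hb0 : ∀ i, 0 ≤ b i) (hb : Antitone b) (n : ℕ) :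
    b 0 / 2 * g n ^ 2 - (∑ i ∈ Icc 1 (n - 1), (b (n - i - 1) - b (n - i)) * g i ^ 2) / 2
        - b (n - 1) / 2 * q ^ 2
      ≤ (b 0 * g n - (∑ i ∈ Icc 1 (n - 1), (b (n - i - 1) - b (n - i)) * g i)
          - b (n - 1) * q) * g n := by
  have hcross : (∑ i ∈ Icc 1 (n - 1), (b (n - i - 1) - b (n - i)) * g i) * g n
      ≤ ∑ i ∈ Icc 1 (n - 1), (b (n - i - 1) - b (n - i)) * ((g i ^ 2 + g n ^ 2) / 2) := by
    rw [sum_mul]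
    refine sum_le_sum fun i _ => ?_
    have hw : 0 ≤ b (n - i - 1) - b (n - i) := sub_nonneg.2 (hb (by omega))
    nlinarith [mul_nonneg hw (sq_nonneg (g i - g n))]
  have hsplit : ∑ i ∈ Icc 1 (n - 1), (b (n - i - 1) - b (n - i)) * ((g i ^ 2 + g n ^ 2) / 2)
      = (∑ i ∈ Icc 1 (n - 1), (b (n - i - 1) - b (n - i)) * g i ^ 2) / 2
        + (b 0 - b (n - 1)) / 2 * g n ^ 2 := by
    rw [← sum_Icc_sub_reflect]
    simp only [sum_div, sum_mul, ← sum_add_distrib]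
    exact sum_congr rfl fun i _ => by ring
  have hq : b (n - 1) * q * g n ≤ b (n - 1) * ((q ^ 2 + g n ^ 2) / 2) := by
    nlinarith [mul_nonneg (hb0 (n - 1)) (sq_nonneg (q - g n))]
  linarith

theorem l1_form_lower_bound (hb0 : ∀ i, 0 ≤ b i) (hb : Antitone b) (N : ℕ) :
    b (N - 1) / 2 * ∑ n ∈ Icc 1 N, g n ^ 2 - (∑ n ∈ Icc 1 N, b (n - 1)) / 2 * q ^ 2
      ≤ ∑ n ∈ Icc 1 N,
          (b 0 * g n - (∑ i ∈ Icc 1 (n - 1), (b (n - i - 1) - b (n - i)) * g i)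
            - b (n - 1) * q) * g n := by
  calc _ ≤ ∑ n ∈ Icc 1 N, b (N - n) / 2 * g n ^ 2 - (∑ n ∈ Icc 1 N, b (n - 1)) / 2 * q ^ 2 := by
        rw [mul_sum]
        gcongr with n hn
        exact hb (by have := (mem_Icc.1 hn).1; omega)
    _ = ∑ n ∈ Icc 1 N, (b 0 / 2 * g n ^ 2
          - (∑ i ∈ Icc 1 (n - 1), (b (n - i - 1) - b (n - i)) * g i ^ 2) / 2
          - b (n - 1) / 2 * q ^ 2) := by
        rw [sum_sub_distrib, sum_sub_distrib, ← sum_div, sum_Icc_sum_Icc_sub_mul]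
        simp only [sum_div, sum_mul, ← sum_sub_distrib]
        exact sum_congr rfl fun n _ => by ring
    _ ≤ _ := sum_le_sum fun n _ => l1_term_lower_bound g q hb0 hb n

end L1Form

theorem antitone_rpow_succ_sub {p : ℝ} (hp0 : 0 ≤ p) (hp1 : p ≤ 1) :
    Antitone fun n : ℕ => ((n : ℝ) + 1) ^ p - (n : ℝ) ^ p := by
  refine antitone_nat_of_succ_le fun n => ?_
  have hn : (0 : ℝ) ≤ n := n.cast_nonneg
  have := (concaveOn_rpow hp0 hp1).slope_anti_adjacent (x := n) (y := n + 1) (z := n + 2)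
    hn (by simp only [Set.mem_Ici]; linarith) (by linarith) (by linarith)
  push_cast
  norm_num [add_assoc] at this ⊢
  linarith

theorem mul_rpow_sub_one_le_rpow_sub_rpow {p x : ℝ} (hp0 : 0 ≤ p) (hp1 : p ≤ 1) (hx : 1 ≤ x) :
    p * x ^ (p - 1) ≤ x ^ p - (x - 1) ^ p := by
  have hx0 : 0 < x := by linarith
  have hbern := rpow_one_add_le_one_add_mul_self (s := -x⁻¹)
    (by rw [neg_le_neg_iff]; exact inv_le_one_of_one_le₀ hx) hp0 hp1
  have hsplit : 1 + -x⁻¹ = (x - 1) / x := by field_simp; ring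
  rw [hsplit, div_rpow (by linarith) hx0.le, div_le_iff₀ (rpow_pos_of_pos hx0 p)] at hbern
  rw [rpow_sub_one hx0.ne']
  have : (1 + p * -x⁻¹) * x ^ p = x ^ p - p * (x ^ p / x) := by field_simp; ring
  linarith

/-- `l1Coeff α τ i = ∫_{iτ}^{(i+1)τ} s^{-α} ds`, the coefficient `bᵢ` of the L1 scheme. -/
noncomputable def l1Coeff (α τ : ℝ) (i : ℕ) : ℝ :=
  τ ^ (1 - α) / (1 - α) * (((i : ℝ) + 1) ^ (1 - α) - (i : ℝ) ^ (1 - α))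

section L1Coeff

variable {α τ : ℝ}

theorem l1Coeff_nonneg (hα1 : α ≤ 1) (hτ : 0 ≤ τ) (i : ℕ) : 0 ≤ l1Coeff α τ i :=
  mul_nonneg (div_nonneg (rpow_nonneg hτ _) (by linarith)) <|
    sub_nonneg.2 <| rpow_le_rpow i.cast_nonneg (by linarith) (by linarith)

theorem l1Coeff_antitone (hα0 : 0 ≤ α) (hα1 : α ≤ 1) (hτ : 0 ≤ τ) : Antitone (l1Coeff α τ) :=
  fun _ _ hij => mul_le_mul_of_nonneg_left
    (antitone_rpow_succ_sub (by linarith) (by linarith) hij)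
    (div_nonneg (rpow_nonneg hτ _) (by linarith))

theorem sum_Icc_l1Coeff (hα1 : α < 1) (hτ : 0 ≤ τ) (N : ℕ) :
    ∑ n ∈ Icc 1 N, l1Coeff α τ (n - 1) = (N * τ) ^ (1 - α) / (1 - α) := by
  rw [mul_rpow N.cast_nonneg hτ, mul_comm, mul_div_right_comm]
  induction N with
  | zero => simp [zero_rpow (by linarith : 1 - α ≠ 0)]
  | succ N ih =>
    rw [sum_Icc_succ_top (by omega), ih, Nat.add_sub_cancel, l1Coeff]
    push_cast
    ring

theorem mul_rpow_neg_le_l1Coeff (hα0 : 0 ≤ α) (hα1 : α < 1) (hτ : 0 ≤ τ) {N : ℕ} (hN : 0 < N) :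
    τ * (N * τ) ^ (-α) ≤ l1Coeff α τ (N - 1) := by
  have hN1 : (1 : ℝ) ≤ N := by exact_mod_cast hN
  have hβ : 0 < 1 - α := by linarith
  have key := mul_rpow_sub_one_le_rpow_sub_rpow hβ.le (by linarith) hN1
  rw [sub_sub_cancel_left] at key
  calc τ * (N * τ) ^ (-α) = τ ^ (1 - α) / (1 - α) * ((1 - α) * (N : ℝ) ^ (-α)) := by
        have hτα : τ ^ (1 - α) = τ * τ ^ (-α) := by
          rw [sub_eq_add_neg, rpow_add' hτ (by linarith), rpow_one]
        rw [mul_rpow N.cast_nonneg hτ, hτα]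
        field_simp
    _ ≤ l1Coeff α τ (N - 1) := by
        rw [l1Coeff, Nat.cast_pred hN, sub_add_cancel]
        exact mul_le_mul_of_nonneg_left key (div_nonneg (rpow_nonneg hτ _) hβ.le)

end L1Coeff

/-- Sign property of the L1 coefficients (Lemma 4.2): with
`bᵢ = (τ^{1-α}/(1-α))[(i+1)^{1-α} - i^{1-α}]`, for any sequence `g` and number `q̂`,
`∑_{n=1}^{N} [b₀ gₙ - ∑_{i=1}^{n-1}(b_{n-i-1} - b_{n-i}) gᵢ - b_{n-1} q̂] gₙ
  ≥ (T^{-α}/2) τ ∑_{n=1}^{N} gₙ² - (T^{1-α}/(2(1-α))) q̂²`. -/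
theorem stmt_10 (α τ : ℝ) (hα : 0 < α) (hα1 : α < 1) (hτ : 0 < τ)
    (N : ℕ) (hN : 0 < N) (T : ℝ) (hT : T = N * τ)
    (b : ℕ → ℝ)
    (hb : ∀ i : ℕ, b i = τ ^ (1 - α) / (1 - α) * (((i : ℝ) + 1) ^ (1 - α) - (i : ℝ) ^ (1 - α)))
    (g : ℕ → ℝ) (q : ℝ) :
    ∑ n ∈ Finset.Icc 1 N,
        (b 0 * g n - (∑ i ∈ Finset.Icc 1 (n - 1), (b (n - i - 1) - b (n - i)) * g i)
          - b (n - 1) * q) * g n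
      ≥ T ^ (-α) / 2 * τ * ∑ n ∈ Finset.Icc 1 N, (g n) ^ 2
        - T ^ (1 - α) / (2 * (1 - α)) * q ^ 2 := by
  subst hT
  obtain rfl : b = l1Coeff α τ := funext hb
  have hlow := mul_rpow_neg_le_l1Coeff hα.le hα1 hτ.le hN
  have hsq : 0 ≤ ∑ n ∈ Finset.Icc 1 N, g n ^ 2 := Finset.sum_nonneg fun n _ => sq_nonneg (g n)
  have hg : (N * τ) ^ (-α) / 2 * τ * ∑ n ∈ Finset.Icc 1 N, g n ^ 2
      ≤ l1Coeff α τ (N - 1) / 2 * ∑ n ∈ Finset.Icc 1 N, g n ^ 2 := by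
    rw [div_mul_eq_mul_div, mul_comm _ τ]
    gcongr
  have hq : (N * τ) ^ (1 - α) / (2 * (1 - α)) * q ^ 2
      = (∑ n ∈ Finset.Icc 1 N, l1Coeff α τ (n - 1)) / 2 * q ^ 2 := by
    rw [sum_Icc_l1Coeff hα1 hτ.le, div_div, mul_comm (1 - α)]
  linarith [l1_form_lower_bound g q (l1Coeff_nonneg hα1.le hτ.le)
    (l1Coeff_antitone hα.le hα1.le hτ.le) N]
end

section
/- Let 0 < α < 1. There exists a constant C > 0 depending only on α such that for every τ > 0, every positive integer n and every twice continuously differentiable function G on [0, nτ], with t_k := kτ and b_i := ∫_{t_i}^{t_{i+1}} s^{−α} ds, the L1 approximation of the Caputo derivative satisfies |(1/Γ(1−α))·∫₀^{t_n} G′(s)·(t_n − s)^{−α} ds − (τ^{−1}/Γ(1−α))·[b₀·G(t_n) − Σ_{i=1}^{n−1}(b_{n−i−1} − b_{n−i})·G(t_i) − b_{n−1}·G(0)]| ≤ C·(max_{0≤t≤t_n} |G″(t)|)·τ^{2−α}. -/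
/-! Abel summation rewrites the L1 sum as `∑ₖ slopeₖ · ∫_{Iₖ} (tₙ - s)^(-α) ds`, where `Iₖ` is the
cell `[tₖ, tₖ₊₁]` and `slopeₖ` the difference quotient of `G` on it, so the error is
`∑ₖ ∫_{Iₖ} (G' s - slopeₖ)(tₙ - s)^(-α) ds`. By the mean value theorem `|G' - slopeₖ| ≤ Kτ` on `Iₖ`,
and `G' - slopeₖ` has mean zero there. On a cell away from `tₙ` the kernel is monotone, so the term
is at most `Kτ²` times the increment of the kernel across the cell; these increments telescope to
at most `τ^(-α)`. On the last cell the kernel is integrable with integral `τ^(1-α)/(1-α)`. -/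

open intervalIntegral MeasureTheory Set

section Slope

variable {F F' F'' : ℝ → ℝ} {a b K : ℝ}

theorem abs_sub_slope_le_of_abs_deriv2_le (hab : a < b)
    (hF : ∀ t ∈ Icc a b, HasDerivWithinAt F (F' t) (Icc a b) t)
    (hF' : ∀ t ∈ Icc a b, HasDerivWithinAt F' (F'' t) (Icc a b) t)
    (hK : ∀ t ∈ Icc a b, |F'' t| ≤ K) {s : ℝ} (hs : s ∈ Icc a b) :
    |F' s - slope F a b| ≤ K * (b - a) := by
  obtain ⟨η, hη, hη_slope⟩ := exists_hasDerivAt_eq_slope F F' hab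
    (fun t ht => (hF t ht).continuousWithinAt)
    (fun t ht => (hF t (Ioo_subset_Icc_self ht)).hasDerivAt (Icc_mem_nhds ht.1 ht.2))
  have hK0 : 0 ≤ K := (abs_nonneg _).trans (hK a (left_mem_Icc.2 hab.le))
  have hLip : |F' s - F' η| ≤ K * |s - η| := by
    simpa only [Real.norm_eq_abs] using Convex.norm_image_sub_le_of_norm_hasDerivWithin_le hF'
      hK (convex_Icc a b) (Ioo_subset_Icc_self hη) hs
  have hsη : |s - η| ≤ b - a :=
    abs_sub_le_iff.2 ⟨by linarith [hs.2, hη.1], by linarith [hs.1, hη.2]⟩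
  rw [slope_def_field, ← hη_slope]
  exact hLip.trans (mul_le_mul_of_nonneg_left hsη hK0)

theorem integral_sub_slope_eq_zero (hab : a < b)
    (hF : ∀ t ∈ Icc a b, HasDerivWithinAt F (F' t) (Icc a b) t)
    (hF'c : ContinuousOn F' (Icc a b)) :
    ∫ s in a..b, (F' s - slope F a b) = 0 := by
  have hF'i : IntervalIntegrable F' volume a b :=
    (hF'c.mono (uIcc_of_le hab.le).subset).intervalIntegrable
  rw [integral_sub hF'i intervalIntegrable_const, intervalIntegral.integral_const,
    integral_eq_sub_of_hasDerivAt_of_le hab.le (fun t ht => (hF t ht).continuousWithinAt)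
      (fun t ht => (hF t (Ioo_subset_Icc_self ht)).hasDerivAt (Icc_mem_nhds ht.1 ht.2)) hF'i,
    slope_def_field, smul_eq_mul]
  field_simp [sub_ne_zero.2 hab.ne']
  ring

end Slope

theorem abs_integral_mul_le_of_integral_eq_zero_of_monotoneOn {g w : ℝ → ℝ} {a b M : ℝ}
    (hab : a ≤ b) (hg : ContinuousOn g (Icc a b)) (hg0 : ∫ s in a..b, g s = 0)
    (hgM : ∀ s ∈ Icc a b, |g s| ≤ M) (hw : ContinuousOn w (Icc a b))
    (hw_mono : MonotoneOn w (Icc a b)) :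
    |∫ s in a..b, g s * w s| ≤ M * (w b - w a) * (b - a) := by
  have hI : uIcc a b = Icc a b := uIcc_of_le hab
  have hgi : IntervalIntegrable g volume a b := (hI ▸ hg).intervalIntegrable
  have hgwi : IntervalIntegrable (fun s => g s * w s) volume a b :=
    (hI ▸ hg.mul hw).intervalIntegrable
  -- subtracting the constant `w a` costs nothing since `g` has mean zero
  have hshift : ∫ s in a..b, g s * w s = ∫ s in a..b, g s * (w s - w a) := by
    simp only [mul_sub]
    rw [integral_sub hgwi (hgi.mul_const _), intervalIntegral.integral_mul_const, hg0, zero_mul,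
      sub_zero]
  rw [hshift, ← Real.norm_eq_abs, ← abs_of_nonneg (sub_nonneg.2 hab)]
  refine norm_integral_le_of_norm_le_const fun s hs => ?_
  rw [uIoc_of_le hab] at hs
  have hs' : s ∈ Icc a b := Ioc_subset_Icc_self hs
  have hwa : w a ≤ w s := hw_mono (left_mem_Icc.2 hab) hs' hs.1.le
  have hwb : w s ≤ w b := hw_mono hs' (right_mem_Icc.2 hab) hs.2
  rw [Real.norm_eq_abs, abs_mul, abs_of_nonneg (sub_nonneg.2 hwa)]
  exact mul_le_mul (hgM s hs') (by linarith) (sub_nonneg.2 hwa) ((abs_nonneg _).trans (hgM s hs'))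

section Kernel

variable {α T : ℝ}

theorem intervalIntegrable_sub_rpow_neg (hα1 : α < 1) (a b : ℝ) :
    IntervalIntegrable (fun s => (T - s) ^ (-α)) volume a b := by
  simpa using (intervalIntegrable_rpow' (a := T - a) (b := T - b) (r := -α)
    (by linarith)).comp_sub_left T

theorem continuousOn_sub_rpow_neg : ContinuousOn (fun s => (T - s) ^ (-α)) (Iio T) :=
  (continuousOn_const.sub continuousOn_id).rpow_const fun _ hs => Or.inl (sub_pos.2 hs).ne'

theorem monotoneOn_sub_rpow_neg (hα : 0 ≤ α) : MonotoneOn (fun s => (T - s) ^ (-α)) (Iio T) :=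
  fun _ _ _ ht hst => Real.rpow_le_rpow_of_nonpos (sub_pos.2 ht) (by linarith) (by linarith)

theorem integral_sub_rpow_neg (hα1 : α < 1) (a b : ℝ) :
    ∫ s in a..b, (b - s) ^ (-α) = (b - a) ^ (1 - α) / (1 - α) := by
  rw [intervalIntegral.integral_comp_sub_left (fun x => x ^ (-α)) b, sub_self,
    integral_rpow (Or.inl (by linarith)), Real.zero_rpow (by linarith)]
  ring_nf

end Kernel

section LocalError

variable {F F' F'' : ℝ → ℝ} {a b K α : ℝ}

theorem abs_integral_sub_slope_mul_rpow_le (hα : 0 ≤ α) (hab : a < b) {T : ℝ} (hbT : b < T)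
    (hF : ∀ t ∈ Icc a b, HasDerivWithinAt F (F' t) (Icc a b) t)
    (hF' : ∀ t ∈ Icc a b, HasDerivWithinAt F' (F'' t) (Icc a b) t)
    (hK : ∀ t ∈ Icc a b, |F'' t| ≤ K) :
    |∫ s in a..b, (F' s - slope F a b) * (T - s) ^ (-α)|
      ≤ K * (b - a) * ((T - b) ^ (-α) - (T - a) ^ (-α)) * (b - a) := by
  have hF'c : ContinuousOn F' (Icc a b) := fun t ht => (hF' t ht).continuousWithinAt
  have hsub : Icc a b ⊆ Iio T := fun _ ht => ht.2.trans_lt hbT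
  exact abs_integral_mul_le_of_integral_eq_zero_of_monotoneOn hab.le
    (hF'c.sub continuousOn_const) (integral_sub_slope_eq_zero hab hF hF'c)
    (fun _ hs => abs_sub_slope_le_of_abs_deriv2_le hab hF hF' hK hs)
    (continuousOn_sub_rpow_neg.mono hsub) ((monotoneOn_sub_rpow_neg hα).mono hsub)

theorem abs_integral_sub_slope_mul_rpow_le_at_singularity (hα1 : α < 1) (hab : a < b)
    (hF : ∀ t ∈ Icc a b, HasDerivWithinAt F (F' t) (Icc a b) t)
    (hF' : ∀ t ∈ Icc a b, HasDerivWithinAt F' (F'' t) (Icc a b) t)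
    (hK : ∀ t ∈ Icc a b, |F'' t| ≤ K) :
    |∫ s in a..b, (F' s - slope F a b) * (b - s) ^ (-α)|
      ≤ K * (b - a) * ((b - a) ^ (1 - α) / (1 - α)) := by
  rw [← Real.norm_eq_abs, ← integral_sub_rpow_neg hα1, ← intervalIntegral.integral_const_mul]
  refine norm_integral_le_of_norm_le hab.le (ae_of_all _ fun s hs => ?_)
    ((intervalIntegrable_sub_rpow_neg hα1 a b).const_mul _)
  have hw : 0 ≤ (b - s) ^ (-α) := Real.rpow_nonneg (sub_nonneg.2 hs.2) _
  rw [Real.norm_eq_abs, abs_mul, abs_of_nonneg hw]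
  exact mul_le_mul_of_nonneg_right
    (abs_sub_slope_le_of_abs_deriv2_le hab hF hF' hK (Ioc_subset_Icc_self hs)) hw

end LocalError

theorem sum_range_sub_mul_eq {R : Type*} [CommRing R] (g a : ℕ → R) {n : ℕ} (hn : 0 < n) :
    ∑ k ∈ Finset.range n, (g (k + 1) - g k) * a k
      = g n * a (n - 1) - ∑ i ∈ Finset.Icc 1 (n - 1), (a i - a (i - 1)) * g i - g 0 * a 0 := by
  induction n, hn using Nat.le_induction with
  | base => simp [sub_mul]
  | succ n hn ih =>
    obtain ⟨m, rfl⟩ : ∃ m, n = m + 1 := ⟨n - 1, by omega⟩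
    rw [Finset.sum_range_succ, ih, Nat.add_sub_cancel, Nat.add_sub_cancel,
      Finset.sum_Icc_succ_top (by omega), Nat.add_sub_cancel]
    ring

theorem integral_mul_sub_sum_mul_integral_eq {f w : ℝ → ℝ} {d t : ℕ → ℝ} {n : ℕ}
    (hfw : ∀ k < n, IntervalIntegrable (fun s => f s * w s) volume (t k) (t (k + 1)))
    (hw : ∀ k < n, IntervalIntegrable w volume (t k) (t (k + 1))) :
    (∫ s in t 0..t n, f s * w s) - ∑ k ∈ Finset.range n, d k * ∫ s in t k..t (k + 1), w s
      = ∑ k ∈ Finset.range n, ∫ s in t k..t (k + 1), (f s - d k) * w s := by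
  rw [← sum_integral_adjacent_intervals hfw, ← Finset.sum_sub_distrib]
  refine Finset.sum_congr rfl fun k hk => ?_
  have hk := Finset.mem_range.1 hk
  simp only [sub_mul]
  rw [integral_sub (hfw k hk) ((hw k hk).const_mul _), intervalIntegral.integral_const_mul]

theorem l1_sum_eq_sum_slope_mul_integral {α τ : ℝ} (hτ : τ ≠ 0) {n : ℕ} (hn : 0 < n)
    (G : ℝ → ℝ) {b : ℕ → ℝ}
    (hb : ∀ i : ℕ, b i = ∫ s in ((i : ℝ) * τ)..(((i : ℝ) + 1) * τ), s ^ (-α)) :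
    τ⁻¹ * (b 0 * G (n * τ)
        - ∑ i ∈ Finset.Icc 1 (n - 1), (b (n - i - 1) - b (n - i)) * G (i * τ)
        - b (n - 1) * G 0)
      = ∑ k ∈ Finset.range n, slope G (k * τ) ((k + 1) * τ)
          * ∫ s in (k * τ)..((k + 1) * τ), (n * τ - s) ^ (-α) := by
  have hb_rev : ∀ k < n,
      b (n - 1 - k) = ∫ s in (k * τ)..((k + 1) * τ), (n * τ - s) ^ (-α) := by
    intro k hk
    rw [hb, intervalIntegral.integral_comp_sub_left (fun x => x ^ (-α)),
      Nat.cast_sub (by omega), Nat.cast_sub hn]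
    congr 1 <;> push_cast <;> ring
  have habel := sum_range_sub_mul_eq (fun k => G (k * τ)) (fun k => b (n - 1 - k)) hn
  simp only [Nat.sub_self, Nat.sub_zero, Nat.cast_zero, zero_mul] at habel
  have hreindex : ∀ i ∈ Finset.Icc 1 (n - 1),
      (b (n - 1 - i) - b (n - 1 - (i - 1))) * G (i * τ)
        = (b (n - i - 1) - b (n - i)) * G (i * τ) := by
    intro i hi
    rw [Finset.mem_Icc] at hi
    rw [show n - 1 - (i - 1) = n - i by omega, Nat.sub_right_comm]
  rw [Finset.sum_congr rfl hreindex] at habel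
  rw [mul_comm (b 0), mul_comm (b (n - 1)), ← habel, Finset.mul_sum]
  refine Finset.sum_congr rfl fun k hk => ?_
  rw [← hb_rev k (Finset.mem_range.1 hk), slope_def_field]
  push_cast
  field_simp
  ring

theorem abs_sum_integral_sub_slope_mul_rpow_le {α τ K : ℝ} (hα : 0 ≤ α) (hα1 : α < 1)
    (hτ : 0 < τ) (m : ℕ) {G G' G'' : ℝ → ℝ}
    (hG : ∀ t ∈ Icc 0 ((m + 1) * τ), HasDerivWithinAt G (G' t) (Icc 0 ((m + 1) * τ)) t)
    (hG' : ∀ t ∈ Icc 0 ((m + 1) * τ), HasDerivWithinAt G' (G'' t) (Icc 0 ((m + 1) * τ)) t)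
    (hK : ∀ t ∈ Icc 0 ((m + 1) * τ), |G'' t| ≤ K) :
    |∑ k ∈ Finset.range (m + 1), ∫ s in (k * τ)..((k + 1) * τ),
        (G' s - slope G (k * τ) ((k + 1) * τ)) * ((m + 1) * τ - s) ^ (-α)|
      ≤ (1 + 1 / (1 - α)) * K * τ ^ (2 - α) := by
  set T := ((m : ℝ) + 1) * τ with hT
  have hK0 : 0 ≤ K := (abs_nonneg _).trans (hK 0 (left_mem_Icc.2 (by positivity)))
  have hcell : ∀ k ≤ m, Icc ((k : ℝ) * τ) ((k + 1) * τ) ⊆ Icc 0 T := fun k hk =>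
    Icc_subset_Icc (by positivity) (by rw [hT]; gcongr)
  have hstep : ∀ k : ℕ, ((k : ℝ) + 1) * τ - k * τ = τ := fun k => by ring
  have hinterior : ∀ k ∈ Finset.range m,
      |∫ s in (k * τ)..((k + 1) * τ),
          (G' s - slope G (k * τ) ((k + 1) * τ)) * (T - s) ^ (-α)|
        ≤ K * τ * ((T - (k + 1) * τ) ^ (-α) - (T - k * τ) ^ (-α)) * τ := by
    intro k hk
    have hk := Finset.mem_range.1 hk
    have hsub := hcell k hk.le
    simpa only [hstep] using abs_integral_sub_slope_mul_rpow_le hα (by linarith)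
      (by rw [hT]; gcongr)
      (fun t ht => (hG t (hsub ht)).mono hsub) (fun t ht => (hG' t (hsub ht)).mono hsub)
      (fun t ht => hK t (hsub ht))
  have hlast := abs_integral_sub_slope_mul_rpow_le_at_singularity (a := m * τ) (b := T) hα1
    (by rw [hT]; linarith) (fun t ht => (hG t (hcell m le_rfl ht)).mono (hcell m le_rfl))
    (fun t ht => (hG' t (hcell m le_rfl ht)).mono (hcell m le_rfl))
    (fun t ht => hK t (hcell m le_rfl ht))
  rw [hT, hstep, ← hT] at hlast
  have htel : ∑ k ∈ Finset.range m, ((T - (k + 1) * τ) ^ (-α) - (T - k * τ) ^ (-α))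
      = τ ^ (-α) - T ^ (-α) := by
    have h := Finset.sum_range_sub (fun j : ℕ => (T - j * τ) ^ (-α)) m
    push_cast at h
    rw [h, zero_mul, sub_zero, hT, show ((m : ℝ) + 1) * τ - m * τ = τ by ring]
  have hT_rpow : 0 ≤ T ^ (-α) := Real.rpow_nonneg (by positivity) _
  have hτ_rpow : τ * τ ^ (1 - α) = τ ^ (2 - α) := by
    rw [show (2 : ℝ) - α = 1 + (1 - α) by ring, Real.rpow_add hτ, Real.rpow_one]
  have hτ_rpow' : τ * τ ^ (-α) * τ = τ ^ (2 - α) := by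
    rw [← hτ_rpow, show (1 : ℝ) - α = 1 + -α by ring, Real.rpow_add hτ, Real.rpow_one]
    ring
  calc _ ≤ ∑ k ∈ Finset.range m,
          |∫ s in (k * τ)..((k + 1) * τ),
            (G' s - slope G (k * τ) ((k + 1) * τ)) * (T - s) ^ (-α)|
        + |∫ s in (m * τ)..T, (G' s - slope G (m * τ) T) * (T - s) ^ (-α)| := by
        rw [Finset.sum_range_succ]
        exact (abs_add_le _ _).trans (add_le_add_left (Finset.abs_sum_le_sum_abs _ _) _)
    _ ≤ K * τ * (τ ^ (-α) - T ^ (-α)) * τ + K * τ * (τ ^ (1 - α) / (1 - α)) := by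
        rw [← htel, Finset.mul_sum, Finset.sum_mul]
        exact add_le_add (Finset.sum_le_sum hinterior) hlast
    _ ≤ K * (τ * τ ^ (-α) * τ) + K * τ * (τ ^ (1 - α) / (1 - α)) := by
        gcongr ?_ + _
        nlinarith [mul_nonneg (mul_nonneg (mul_nonneg hK0 hτ.le) hτ.le) hT_rpow]
    _ = (1 + 1 / (1 - α)) * K * τ ^ (2 - α) := by
        rw [mul_assoc K τ, ← mul_div_assoc, hτ_rpow, hτ_rpow']
        ring

theorem abs_integral_sub_sum_slope_mul_integral_le {α τ K : ℝ} (hα : 0 ≤ α) (hα1 : α < 1)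
    (hτ : 0 < τ) {n : ℕ} (hn : 0 < n) {G G' G'' : ℝ → ℝ}
    (hG : ∀ t ∈ Icc 0 (n * τ), HasDerivWithinAt G (G' t) (Icc 0 (n * τ)) t)
    (hG' : ∀ t ∈ Icc 0 (n * τ), HasDerivWithinAt G' (G'' t) (Icc 0 (n * τ)) t)
    (hK : ∀ t ∈ Icc 0 (n * τ), |G'' t| ≤ K) :
    |(∫ s in 0..n * τ, G' s * (n * τ - s) ^ (-α))
        - ∑ k ∈ Finset.range n, slope G (k * τ) ((k + 1) * τ)
            * ∫ s in (k * τ)..((k + 1) * τ), (n * τ - s) ^ (-α)|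
      ≤ (1 + 1 / (1 - α)) * K * τ ^ (2 - α) := by
  have hG'c : ContinuousOn G' (Icc 0 (n * τ)) := fun t ht => (hG' t ht).continuousWithinAt
  have hcell : ∀ k < n, uIcc ((k : ℝ) * τ) ((k + 1 : ℕ) * τ) ⊆ Icc 0 (n * τ) := by
    intro k hk
    rw [uIcc_of_le (by gcongr; simp)]
    exact Icc_subset_Icc (by positivity) (by gcongr; exact_mod_cast hk)
  have hdecomp := integral_mul_sub_sum_mul_integral_eq
    (f := G') (w := fun s => (n * τ - s) ^ (-α))
    (d := fun k => slope G (k * τ) ((k + 1) * τ)) (t := fun k => k * τ)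
    (fun k hk => (intervalIntegrable_sub_rpow_neg hα1 _ _).continuousOn_mul
      (hG'c.mono (hcell k hk)))
    (fun k _ => intervalIntegrable_sub_rpow_neg hα1 _ _)
  push_cast at hdecomp
  rw [zero_mul] at hdecomp
  rw [hdecomp]
  obtain ⟨m, rfl⟩ : ∃ m, n = m + 1 := ⟨n - 1, by omega⟩
  push_cast at hG hG' hK ⊢
  exact abs_sum_integral_sub_slope_mul_rpow_le hα hα1 hτ m hG hG' hK

/-- Truncation error of the L1 approximation of the Caputo derivative of order `α`:
there is a constant `C > 0` depending only on `α` such that for every step `τ > 0`,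
level `n ≥ 1`, and `C²` function `G` on `[0, nτ]` (with first and second derivatives
`G'`, `G''`, and `K` any bound for `|G''|` on `[0, nτ]`),
`|(1/Γ(1-α)) ∫₀^{nτ} G'(s)(nτ - s)^{-α} ds - (τ⁻¹/Γ(1-α))·[b₀ G(nτ)
   - ∑_{i=1}^{n-1}(b_{n-i-1} - b_{n-i}) G(iτ) - b_{n-1} G(0)]| ≤ C·K·τ^{2-α}`,
where `bᵢ = ∫_{iτ}^{(i+1)τ} s^{-α} ds`. -/
theorem stmt_11 (α : ℝ) (hα : 0 < α) (hα1 : α < 1) :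
    ∃ C > 0, ∀ (τ : ℝ), 0 < τ → ∀ (n : ℕ), 0 < n →
      ∀ (G G' G'' : ℝ → ℝ),
        (∀ t ∈ Set.Icc (0 : ℝ) ((n : ℝ) * τ),
          HasDerivWithinAt G (G' t) (Set.Icc (0 : ℝ) ((n : ℝ) * τ)) t) →
        (∀ t ∈ Set.Icc (0 : ℝ) ((n : ℝ) * τ),
          HasDerivWithinAt G' (G'' t) (Set.Icc (0 : ℝ) ((n : ℝ) * τ)) t) →
        ContinuousOn G'' (Set.Icc (0 : ℝ) ((n : ℝ) * τ)) →
        ∀ K : ℝ, (∀ t ∈ Set.Icc (0 : ℝ) ((n : ℝ) * τ), |G'' t| ≤ K) →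
        ∀ b : ℕ → ℝ,
          (∀ i : ℕ, b i = ∫ s in ((i : ℝ) * τ)..(((i : ℝ) + 1) * τ), s ^ (-α)) →
          |(1 / Real.Gamma (1 - α)) *
                (∫ s in (0 : ℝ)..((n : ℝ) * τ), G' s * ((n : ℝ) * τ - s) ^ (-α))
              - τ⁻¹ / Real.Gamma (1 - α) *
                (b 0 * G ((n : ℝ) * τ)
                  - (∑ i ∈ Finset.Icc 1 (n - 1), (b (n - i - 1) - b (n - i)) * G ((i : ℝ) * τ))
                  - b (n - 1) * G 0)|
            ≤ C * K * τ ^ (2 - α) := by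
  have hΓ : 0 < Real.Gamma (1 - α) := Real.Gamma_pos_of_pos (by linarith)
  refine ⟨(1 + 1 / (1 - α)) / Real.Gamma (1 - α),
    div_pos (by linarith [one_div_pos.2 (sub_pos.2 hα1)]) hΓ, ?_⟩
  intro τ hτ n hn G G' G'' hG hG' _ K hK b hb
  rw [show ∀ I B : ℝ, 1 / Real.Gamma (1 - α) * I - τ⁻¹ / Real.Gamma (1 - α) * B
      = (I - τ⁻¹ * B) / Real.Gamma (1 - α) by intros; ring,
    l1_sum_eq_sum_slope_mul_integral hτ.ne' hn G hb, abs_div, abs_of_pos hΓ, div_le_iff₀ hΓ]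
  calc _ ≤ (1 + 1 / (1 - α)) * K * τ ^ (2 - α) :=
        abs_integral_sub_sum_slope_mul_integral_le hα.le hα1 hτ hn hG hG' hK
    _ = _ := by field_simp
end

section
/- Let a ∈ ℝ, h > 0, and let f be five times continuously differentiable on [a−h, a+h], with M₅ := max over [a−h,a+h] of |f|, |f′|, |f″|, |f‴|, |f⁗|, |f⁽⁵⁾|. Define the pointwise operators Δ_h g := (g(a+h) − g(a−h))/(2h) and ψ_h(u,v) := (1/3)·[u(a)·Δ_h v + Δ_h(u·v)] for functions u, v on [a−h, a+h], and set F := f″. Then there exists a constant C > 0 depending only on M₅ (and not on h) such that |f(a)·f′(a) − ψ_h(f,f) + (h²/2)·ψ_h(F,f)| ≤ C·h⁴. -/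
/-!
Write `Δ` and `μ` for the central difference and the central mean at `a` with step `h`. The
discrete product rule `Δ(uv) = Δu·μv + μu·Δv` expresses the error through `f(a), f'(a), F(a)`
and the four quantities `Δf, μf, ΔF, μF`. Taylor expansion at `a` in both directions gives
`Δf = f' + h²f'''/6 + O(h⁴)`, `μf = f + h²f''/2 + O(h⁴)`, `ΔF = f''' + O(h²)` and
`μF = f'' + O(h²)`, with constants controlled by `M₅`. Substituting, the terms of order `1` and
`h²` cancel exactly, and what is left is `h⁴f''f'''/12` plus remainders of order `h⁴`. For
`h ≥ 1` every term is `O(M₅²)` and a crude bound suffices.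
-/

open Set Nat

section IteratedDerivWithin

variable {𝕜 : Type*} [NontriviallyNormedField 𝕜] {F : Type*} [NormedAddCommGroup F]
  [NormedSpace 𝕜 F] {f : 𝕜 → F} {s : Set 𝕜}

theorem iteratedDerivWithin_iteratedDerivWithin (m n : ℕ) :
    iteratedDerivWithin m (iteratedDerivWithin n f s) s = iteratedDerivWithin (m + n) f s := by
  have hiter : ∀ k (g : 𝕜 → F), iteratedDerivWithin k g s = (fun g => derivWithin g s)^[k] g :=
    fun _ _ => funext fun _ => iteratedDerivWithin_eq_iterate
  rw [hiter, hiter, hiter, Function.iterate_add_apply]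

theorem ContDiffOn.contDiffOn_iteratedDerivWithin {m k : ℕ}
    (hf : ContDiffOn 𝕜 (m + k : ℕ) f s) (hs : UniqueDiffOn 𝕜 s) :
    ContDiffOn 𝕜 m (iteratedDerivWithin k f s) s := by
  induction k generalizing m with
  | zero => simpa using hf
  | succ k ih =>
    rw [iteratedDerivWithin_succ]
    have hf' : ContDiffOn 𝕜 (m + 1 + k : ℕ) f s := by rwa [show m + 1 + k = m + (k + 1) by omega]
    exact (ih hf').derivWithin hs le_rfl

end IteratedDerivWithin

theorem abs_sub_taylorWithinEval_le {f : ℝ → ℝ} {s : Set ℝ} [s.OrdConnected] {n : ℕ}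
    {x₀ x M : ℝ} (hs : UniqueDiffOn ℝ s) (hf : ContDiffOn ℝ (n + 1) f s) (hx₀ : x₀ ∈ s)
    (hx : x ∈ s) (hM : ∀ y ∈ s, |iteratedDerivWithin (n + 1) f s y| ≤ M) :
    |f x - taylorWithinEval f n s x₀ x| ≤ M * |x - x₀| ^ (n + 1) / (n + 1)! := by
  rcases eq_or_ne x₀ x with rfl | hne
  · simp [taylorWithinEval_self]
  have hsub : uIcc x₀ x ⊆ s := OrdConnected.uIcc_subset ‹_› hx₀ hx
  have hu : UniqueDiffOn ℝ (uIcc x₀ x) := uniqueDiffOn_uIcc hne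
  have hderiv : ∀ k ≤ n + 1, ∀ y ∈ uIcc x₀ x,
      iteratedDerivWithin k f (uIcc x₀ x) y = iteratedDerivWithin k f s y := fun k hk y hy => by
    simp only [iteratedDerivWithin_eq_iteratedFDerivWithin,
      iteratedFDerivWithin_subset hsub hu hs (hf.of_le (by exact_mod_cast hk)) hy]
  have htaylor : taylorWithinEval f n (uIcc x₀ x) x₀ x = taylorWithinEval f n s x₀ x := by
    simp only [taylor_within_apply]
    refine Finset.sum_congr rfl fun k hk => ?_
    rw [hderiv k (by rw [Finset.mem_range] at hk; omega) x₀ left_mem_uIcc]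
  obtain ⟨y, hy, hrem⟩ := taylor_mean_remainder_lagrange hne (hf.mono hsub).of_succ
    (((hf.mono hsub).differentiableOn_iteratedDerivWithin (by exact_mod_cast n.lt_succ_self)
      hu).mono Ioo_subset_Icc_self)
  have hy' : y ∈ uIcc x₀ x := Ioo_subset_Icc_self hy
  rw [← htaylor, hrem, hderiv _ le_rfl y hy', abs_div, abs_mul, abs_pow, Nat.abs_cast]
  gcongr
  exact hM y (hsub hy')

theorem abs_sub_taylor_sum_Icc_le {g : ℝ → ℝ} {a h M t : ℝ} {n : ℕ} (hh : 0 < h)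
    (hg : ContDiffOn ℝ (n + 1) g (Icc (a - h) (a + h)))
    (hM : ∀ y ∈ Icc (a - h) (a + h),
      |iteratedDerivWithin (n + 1) g (Icc (a - h) (a + h)) y| ≤ M)
    (ht : |t| ≤ h) :
    |g (a + t) - ∑ k ∈ Finset.range (n + 1),
        iteratedDerivWithin k g (Icc (a - h) (a + h)) a * t ^ k / k !| ≤
      M * h ^ (n + 1) / (n + 1)! := by
  have ha : a ∈ Icc (a - h) (a + h) := ⟨by linarith, by linarith⟩
  have hM0 : 0 ≤ M := (abs_nonneg _).trans (hM a ha)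
  have hx : a + t ∈ Icc (a - h) (a + h) := by
    constructor <;> linarith [neg_abs_le t, le_abs_self t]
  have := abs_sub_taylorWithinEval_le (uniqueDiffOn_Icc (by linarith)) hg ha hx hM
  rw [taylor_within_apply, add_sub_cancel_left] at this
  refine (le_of_eq ?_).trans (this.trans ?_)
  · congr 2
    refine Finset.sum_congr rfl fun k _ => ?_
    rw [smul_eq_mul]
    ring
  · gcongr

noncomputable def centralDiff (g : ℝ → ℝ) (a h : ℝ) : ℝ := (g (a + h) - g (a - h)) / (2 * h)

noncomputable def centralMean (g : ℝ → ℝ) (a h : ℝ) : ℝ := (g (a + h) + g (a - h)) / 2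

/-- `ψ_h(u, v)` at `a`. -/
noncomputable def compactConvection (u v : ℝ → ℝ) (a h : ℝ) : ℝ :=
  1 / 3 * (u a * centralDiff v a h + centralDiff (fun x => u x * v x) a h)

section CentralDifference

variable {g : ℝ → ℝ} {a h M : ℝ}

theorem centralDiff_mul (u v : ℝ → ℝ) (a h : ℝ) :
    centralDiff (fun x => u x * v x) a h =
      centralDiff u a h * centralMean v a h + centralMean u a h * centralDiff v a h := by
  simp only [centralDiff, centralMean]
  ring

theorem abs_centralDiff_sub_le {p q ε : ℝ} (hh : 0 < h) (hp : |g (a + h) - p| ≤ ε)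
    (hq : |g (a - h) - q| ≤ ε) : |centralDiff g a h - (p - q) / (2 * h)| ≤ ε / h := by
  calc |centralDiff g a h - (p - q) / (2 * h)|
      = |(g (a + h) - p) - (g (a - h) - q)| / (2 * h) := by
        have h2 : 0 < 2 * h := by linarith
        rw [← abs_of_pos h2, ← abs_div, abs_of_pos h2, centralDiff]
        ring_nf
    _ ≤ (ε + ε) / (2 * h) := by gcongr; exact (abs_sub _ _).trans (add_le_add hp hq)
    _ = ε / h := by field_simp; ring

theorem abs_centralMean_sub_le {p q ε : ℝ} (hp : |g (a + h) - p| ≤ ε)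
    (hq : |g (a - h) - q| ≤ ε) : |centralMean g a h - (p + q) / 2| ≤ ε := by
  calc |centralMean g a h - (p + q) / 2| = |(g (a + h) - p) + (g (a - h) - q)| / 2 := by
        rw [← abs_two, ← abs_div, abs_two, centralMean]
        ring_nf
    _ ≤ (ε + ε) / 2 := by gcongr; exact (abs_add_le _ _).trans (add_le_add hp hq)
    _ = ε := by ring

theorem abs_centralDiff_sub_deriv_le (hh : 0 < h) (hg : ContDiffOn ℝ 3 g (Icc (a - h) (a + h)))
    (hM : ∀ y ∈ Icc (a - h) (a + h), |iteratedDerivWithin 3 g (Icc (a - h) (a + h)) y| ≤ M) :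
    |centralDiff g a h - iteratedDerivWithin 1 g (Icc (a - h) (a + h)) a| ≤ M * h ^ 2 / 6 := by
  have hp := abs_sub_taylor_sum_Icc_le (n := 2) hh hg hM (abs_of_pos hh).le
  have hq := abs_sub_taylor_sum_Icc_le (n := 2) (t := -h) hh hg hM
    (by rw [abs_neg, abs_of_pos hh])
  rw [← sub_eq_add_neg] at hq
  convert abs_centralDiff_sub_le hh hp hq using 1
  · congr 2
    simp only [Finset.sum_range_succ, Finset.sum_range_zero]
    field_simp
    ring
  · rw [show ((2 + 1)! : ℝ) = 6 by norm_num [Nat.factorial]]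
    field_simp

theorem abs_centralDiff_sub_deriv_add_third_le (hh : 0 < h)
    (hg : ContDiffOn ℝ 5 g (Icc (a - h) (a + h)))
    (hM : ∀ y ∈ Icc (a - h) (a + h), |iteratedDerivWithin 5 g (Icc (a - h) (a + h)) y| ≤ M) :
    |centralDiff g a h - (iteratedDerivWithin 1 g (Icc (a - h) (a + h)) a +
        h ^ 2 / 6 * iteratedDerivWithin 3 g (Icc (a - h) (a + h)) a)| ≤ M * h ^ 4 / 120 := by
  have hp := abs_sub_taylor_sum_Icc_le (n := 4) hh hg hM (abs_of_pos hh).le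
  have hq := abs_sub_taylor_sum_Icc_le (n := 4) (t := -h) hh hg hM
    (by rw [abs_neg, abs_of_pos hh])
  rw [← sub_eq_add_neg] at hq
  convert abs_centralDiff_sub_le hh hp hq using 1
  · congr 2
    simp only [Finset.sum_range_succ, Finset.sum_range_zero]
    field_simp
    ring
  · rw [show ((4 + 1)! : ℝ) = 120 by norm_num [Nat.factorial]]
    field_simp

theorem abs_centralMean_sub_self_le (hh : 0 < h)
    (hg : ContDiffOn ℝ 2 g (Icc (a - h) (a + h)))
    (hM : ∀ y ∈ Icc (a - h) (a + h), |iteratedDerivWithin 2 g (Icc (a - h) (a + h)) y| ≤ M) :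
    |centralMean g a h - g a| ≤ M * h ^ 2 / 2 := by
  have hp := abs_sub_taylor_sum_Icc_le (n := 1) hh hg hM (abs_of_pos hh).le
  have hq := abs_sub_taylor_sum_Icc_le (n := 1) (t := -h) hh hg hM
    (by rw [abs_neg, abs_of_pos hh])
  rw [← sub_eq_add_neg] at hq
  convert abs_centralMean_sub_le hp hq using 1
  · congr 2
    simp only [Finset.sum_range_succ, Finset.sum_range_zero, iteratedDerivWithin_zero]
    field_simp
    ring
  · simp [Nat.factorial]

theorem abs_centralMean_sub_self_add_second_le (hh : 0 < h)
    (hg : ContDiffOn ℝ 4 g (Icc (a - h) (a + h)))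
    (hM : ∀ y ∈ Icc (a - h) (a + h), |iteratedDerivWithin 4 g (Icc (a - h) (a + h)) y| ≤ M) :
    |centralMean g a h - (g a + h ^ 2 / 2 * iteratedDerivWithin 2 g (Icc (a - h) (a + h)) a)| ≤
      M * h ^ 4 / 24 := by
  have hp := abs_sub_taylor_sum_Icc_le (n := 3) hh hg hM (abs_of_pos hh).le
  have hq := abs_sub_taylor_sum_Icc_le (n := 3) (t := -h) hh hg hM
    (by rw [abs_neg, abs_of_pos hh])
  rw [← sub_eq_add_neg] at hq
  convert abs_centralMean_sub_le hp hq using 1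
  · congr 2
    simp only [Finset.sum_range_succ, Finset.sum_range_zero, iteratedDerivWithin_zero]
    field_simp
    ring
  · simp [Nat.factorial]

theorem abs_centralDiff_le (hh : 0 < h) (hp : |g (a + h)| ≤ M) (hm : |g (a - h)| ≤ M) :
    |centralDiff g a h| ≤ M / h := by
  simpa using abs_centralDiff_sub_le (p := 0) (q := 0) hh (by simpa using hp) (by simpa using hm)

theorem abs_centralMean_le (hp : |g (a + h)| ≤ M) (hm : |g (a - h)| ≤ M) :
    |centralMean g a h| ≤ M := by
  simpa using abs_centralMean_sub_le (p := 0) (q := 0) (by simpa using hp) (by simpa using hm)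

theorem compactConvection_eq (u v : ℝ → ℝ) (a h : ℝ) :
    compactConvection u v a h = 1 / 3 * (u a * centralDiff v a h +
      (centralDiff u a h * centralMean v a h + centralMean u a h * centralDiff v a h)) := by
  rw [compactConvection, centralDiff_mul]

end CentralDifference

theorem abs_mul_le_mul_of_abs_le {α : Type*} [Ring α] [LinearOrder α] [IsStrictOrderedRing α]
    {x y A B : α} (hx : |x| ≤ A) (hy : |y| ≤ B) : |x * y| ≤ A * B := by
  rw [abs_mul]
  exact mul_le_mul hx hy (abs_nonneg y) ((abs_nonneg x).trans hx)

section TruncationError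

variable {M h f₀ f₁ f₂ f₃ D S DF SF : ℝ}

/- With `f₀, …, f₃` standing for `f(a), …, f'''(a)` and `D, S, DF, SF` for `Δf, μf, ΔF, μF`,
the terms of order `1` and `h²` cancel; every other term carries one of the Taylor remainders. -/
theorem truncationError_eq :
    f₀ * f₁ - 1 / 3 * (f₀ * D + (D * S + S * D))
        + h ^ 2 / 2 * (1 / 3 * (f₂ * D + (DF * S + SF * D))) =
      h ^ 4 / 12 * (f₂ * f₃)
        - 1 / 3 * ((D - (f₁ + h ^ 2 / 6 * f₃)) * (f₀ + 2 * S - h ^ 2 * f₂))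
        - (S - (f₀ + h ^ 2 / 2 * f₂)) * (2 / 3 * f₁ - h ^ 2 / 18 * f₃)
        + h ^ 2 / 6 * ((DF - f₃) * S) + h ^ 2 / 6 * ((SF - f₂) * D) := by
  ring

theorem abs_truncationError_le_of_le_one (hh : 0 < h) (hh₁ : h ≤ 1)
    (hf₀ : |f₀| ≤ M) (hf₁ : |f₁| ≤ M) (hf₂ : |f₂| ≤ M) (hf₃ : |f₃| ≤ M) (hS : |S| ≤ M)
    (hD : |D - (f₁ + h ^ 2 / 6 * f₃)| ≤ M * h ^ 4 / 120)
    (hS₂ : |S - (f₀ + h ^ 2 / 2 * f₂)| ≤ M * h ^ 4 / 24)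
    (hDF : |DF - f₃| ≤ M * h ^ 2 / 6) (hSF : |SF - f₂| ≤ M * h ^ 2 / 2) :
    |f₀ * f₁ - 1 / 3 * (f₀ * D + (D * S + S * D))
        + h ^ 2 / 2 * (1 / 3 * (f₂ * D + (DF * S + SF * D)))| ≤ M ^ 2 * h ^ 4 := by
  have hh₂ : h ^ 2 ≤ 1 := pow_le_one₀ hh.le hh₁
  have habs : ∀ {c : ℝ}, 0 ≤ c → |c| ≤ c := fun hc => (abs_of_nonneg hc).le
  have hcf₂ : |h ^ 2 * f₂| ≤ 1 * M := abs_mul_le_mul_of_abs_le (by simpa using hh₂) hf₂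
  have hcf₃ : |h ^ 2 * f₃| ≤ 1 * M := abs_mul_le_mul_of_abs_le (by simpa using hh₂) hf₃
  have hr : M * h ^ 4 ≤ M :=
    mul_le_of_le_one_right ((abs_nonneg _).trans hf₀) (pow_le_one₀ hh.le hh₁)
  rw [abs_le] at hf₀ hf₁ hf₂ hf₃ hS hD hcf₂ hcf₃
  have hD' : |D| ≤ 2 * M := abs_le.mpr ⟨by linarith, by linarith⟩
  have h₁ : |f₀ + 2 * S - h ^ 2 * f₂| ≤ 4 * M := abs_le.mpr ⟨by linarith, by linarith⟩
  have h₂ : |2 / 3 * f₁ - h ^ 2 / 18 * f₃| ≤ M := abs_le.mpr ⟨by linarith, by linarith⟩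
  have b₁ := abs_mul_le_mul_of_abs_le (habs (by positivity : 0 ≤ h ^ 4 / 12))
    (abs_mul_le_mul_of_abs_le (abs_le.mpr hf₂) (abs_le.mpr hf₃))
  have b₂ := abs_mul_le_mul_of_abs_le (habs (by norm_num : (0 : ℝ) ≤ 1 / 3))
    (abs_mul_le_mul_of_abs_le (abs_le.mpr hD) h₁)
  have b₃ := abs_mul_le_mul_of_abs_le hS₂ h₂
  have b₄ := abs_mul_le_mul_of_abs_le (habs (by positivity : 0 ≤ h ^ 2 / 6))
    (abs_mul_le_mul_of_abs_le hDF (abs_le.mpr hS))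
  have b₅ := abs_mul_le_mul_of_abs_le (habs (by positivity : 0 ≤ h ^ 2 / 6))
    (abs_mul_le_mul_of_abs_le hSF hD')
  have hpos : 0 ≤ M ^ 2 * h ^ 4 := by positivity
  rw [truncationError_eq (f₃ := f₃), abs_le]
  rw [abs_le] at b₁ b₂ b₃ b₄ b₅
  constructor <;> linarith

theorem abs_truncationError_le_of_one_le (hh : 1 ≤ h)
    (hf₀ : |f₀| ≤ M) (hf₁ : |f₁| ≤ M) (hf₂ : |f₂| ≤ M) (hD : |D| ≤ M / h) (hS : |S| ≤ M)
    (hDF : |DF| ≤ M / h) (hSF : |SF| ≤ M) :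
    |f₀ * f₁ - 1 / 3 * (f₀ * D + (D * S + S * D))
        + h ^ 2 / 2 * (1 / 3 * (f₂ * D + (DF * S + SF * D)))| ≤ 3 * M ^ 2 * h ^ 4 := by
  have hM : 0 ≤ M := (abs_nonneg _).trans hf₀
  have hD₁ : |D| ≤ M := hD.trans (div_le_self hM hh)
  have hDF₁ : |DF| ≤ M := hDF.trans (div_le_self hM hh)
  have habs : ∀ {c : ℝ}, 0 ≤ c → |c| ≤ c := fun hc => (abs_of_nonneg hc).le
  have hc : 0 ≤ h ^ 2 / 6 := by positivity
  have b₁ := abs_mul_le_mul_of_abs_le hf₀ hf₁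
  have b₂ := abs_mul_le_mul_of_abs_le hf₀ hD₁
  have b₃ := abs_mul_le_mul_of_abs_le hD₁ hS
  have b₄ := abs_mul_le_mul_of_abs_le (habs hc) (abs_mul_le_mul_of_abs_le hf₂ hD₁)
  have b₅ := abs_mul_le_mul_of_abs_le (habs hc) (abs_mul_le_mul_of_abs_le hDF₁ hS)
  have b₆ := abs_mul_le_mul_of_abs_le (habs hc) (abs_mul_le_mul_of_abs_le hSF hD₁)
  have h₂ : 1 ≤ h ^ 2 := one_le_pow₀ hh
  have h₄ : h ^ 2 ≤ h ^ 4 := pow_le_pow_right₀ hh (by norm_num)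
  have e₂ := mul_le_mul_of_nonneg_left (h₂.trans h₄) (sq_nonneg M)
  have e₄ := mul_le_mul_of_nonneg_left h₄ (sq_nonneg M)
  rw [abs_le] at b₁ b₂ b₃ b₄ b₅ b₆ ⊢
  constructor <;> linarith

end TruncationError

theorem abs_truncationError_compactConvection_le {f : ℝ → ℝ} {a h M : ℝ} (hh : 0 < h)
    (hf : ContDiffOn ℝ 5 f (Icc (a - h) (a + h)))
    (hM : ∀ k ≤ 5, ∀ x ∈ Icc (a - h) (a + h),
      |iteratedDerivWithin k f (Icc (a - h) (a + h)) x| ≤ M) :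
    |f a * derivWithin f (Icc (a - h) (a + h)) a - compactConvection f f a h
        + h ^ 2 / 2 * compactConvection (iteratedDerivWithin 2 f (Icc (a - h) (a + h))) f a h|
      ≤ 3 * M ^ 2 * h ^ 4 := by
  set I := Icc (a - h) (a + h)
  set F := iteratedDerivWithin 2 f I
  rw [compactConvection_eq, compactConvection_eq, ← iteratedDerivWithin_one]
  have ha : a ∈ I := ⟨by linarith, by linarith⟩
  have hp : a + h ∈ I := ⟨by linarith, le_rfl⟩
  have hm : a - h ∈ I := ⟨le_rfl, by linarith⟩
  have hf₀ : ∀ y ∈ I, |f y| ≤ M := fun y hy => by simpa using hM 0 (by norm_num) y hy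
  have hFd : ∀ k, iteratedDerivWithin k F I = iteratedDerivWithin (k + 2) f I :=
    fun k => iteratedDerivWithin_iteratedDerivWithin k 2
  have hS := abs_centralMean_le (hf₀ _ hp) (hf₀ _ hm)
  rcases le_or_gt h 1 with hh₁ | hh₁
  · have hF : ContDiffOn ℝ 3 F I :=
      hf.contDiffOn_iteratedDerivWithin (uniqueDiffOn_Icc (by linarith))
    have hDF := abs_centralDiff_sub_deriv_le hh hF fun y hy => by
      rw [hFd]; exact hM 5 le_rfl y hy
    rw [hFd] at hDF
    refine (abs_truncationError_le_of_le_one hh hh₁ (hf₀ a ha) (hM 1 (by norm_num) a ha)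
      (hM 2 (by norm_num) a ha) (hM 3 (by norm_num) a ha) hS
      (abs_centralDiff_sub_deriv_add_third_le hh hf (hM 5 le_rfl))
      (abs_centralMean_sub_self_add_second_le hh (hf.of_le (by norm_num)) (hM 4 (by norm_num)))
      hDF (abs_centralMean_sub_self_le hh (hF.of_le (by norm_num)) fun y hy => by
        rw [hFd]; exact hM 4 (by norm_num) y hy)).trans ?_
    linarith [mul_nonneg (sq_nonneg M) (pow_nonneg hh.le 4)]
  · exact abs_truncationError_le_of_one_le hh₁.le (hf₀ a ha) (hM 1 (by norm_num) a ha)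
      (hM 2 (by norm_num) a ha) (abs_centralDiff_le hh (hf₀ _ hp) (hf₀ _ hm)) hS
      (abs_centralDiff_le hh (hM 2 (by norm_num) _ hp) (hM 2 (by norm_num) _ hm))
      (abs_centralMean_le (hM 2 (by norm_num) _ hp) (hM 2 (by norm_num) _ hm))

/-- Fourth-order accuracy of the pointwise nonlinear compact operator
`ψ_h(u,v) = (1/3)[u(a)·Δ_h v + Δ_h(u·v)]` with `Δ_h g = (g(a+h) - g(a-h))/(2h)`:
for `f` five times continuously differentiable on `[a-h, a+h]` with `|f|, …, |f⁽⁵⁾|`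
bounded by `M₅` there, and `F := f''`,
`|f(a)f'(a) - ψ_h(f,f) + (h²/2)ψ_h(F,f)| ≤ C·h⁴` with `C` depending only on `M₅`. -/
theorem stmt_12 (M5 : ℝ) (hM5 : 0 < M5) :
    ∃ C > 0, ∀ (a h : ℝ), 0 < h → ∀ f : ℝ → ℝ,
      ∀ s : Set ℝ, s = Set.Icc (a - h) (a + h) →
      ContDiffOn ℝ 5 f s →
      (∀ k : ℕ, k ≤ 5 → ∀ x ∈ s, |iteratedDerivWithin k f s x| ≤ M5) →
      ∀ F : ℝ → ℝ, F = iteratedDerivWithin 2 f s →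
      |f a * derivWithin f s a
          - (1 / 3) * (f a * ((f (a + h) - f (a - h)) / (2 * h))
              + (f (a + h) * f (a + h) - f (a - h) * f (a - h)) / (2 * h))
          + h ^ 2 / 2 * ((1 / 3) * (F a * ((f (a + h) - f (a - h)) / (2 * h))
              + (F (a + h) * f (a + h) - F (a - h) * f (a - h)) / (2 * h)))|
        ≤ C * h ^ 4 := by
  refine ⟨3 * M5 ^ 2, by positivity, ?_⟩
  rintro a h hh f s rfl hf hM F rfl
  exact abs_truncationError_compactConvection_le hh hf hM
end
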